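/- arXiv:2312.16889 — 2 statements merged into one kernel-verified Lean document; each statement's English description precedes it below -/
import Mathlib

section
/- Fix an integer n ≥ 2, a real number R₁ > 0, and let f₁(r) = r − R₁ⁿ/r^{n−1}. Let Ω ⊆ ℝⁿ\{0} be a bounded measurable set that is invariant under the rotation by angle π/2 in every coordinate plane (xᵢ,xⱼ), i ≠ j. Define uᵢ(x) = f₁(‖x‖)·xᵢ/‖x‖. Then for all indices i ≠ j in {1,…,n}, ∫_Ω ⟨∇uᵢ(x), ∇uⱼ(x)⟩ dV = 0. -/
/-!
The rotation `R` by `π/2` in the `(xᵢ, xⱼ)`-plane is a volume-preserving linear isometry with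
`R '' Ω = Ω`, `uᵢ ∘ R = -uⱼ` and `uⱼ ∘ R = uᵢ`. Composing with an isometry transforms gradients
by `R⁻¹`, which preserves inner products, so `⟪∇uᵢ, ∇uⱼ⟫ ∘ R = ⟪∇(-uⱼ), ∇uᵢ⟫ = -⟪∇uᵢ, ∇uⱼ⟫`.
The change of variables `x ↦ R x` then shows that the integral over `Ω` equals its own negative.
-/

open MeasureTheory RealInnerProductSpace

/-- The rotation by angle `π/2` in the `(xᵢ, xⱼ)`-coordinate plane of `ℝⁿ`:
it sends `xᵢ ↦ −xⱼ`, `xⱼ ↦ xᵢ` and fixes all the other coordinates. -/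
def planeRotation (n : ℕ) (i j : Fin n)
    (x : EuclideanSpace ℝ (Fin n)) : EuclideanSpace ℝ (Fin n) :=
  WithLp.toLp 2 (fun k => if k = i then -(x j) else if k = j then x i else x k)

section Gradient

variable {𝕜 E F : Type*} [RCLike 𝕜] [NormedAddCommGroup E] [InnerProductSpace 𝕜 E]
  [CompleteSpace E] [NormedAddCommGroup F] [InnerProductSpace 𝕜 F] [CompleteSpace F]

theorem gradient_neg (f : E → 𝕜) (x : E) : gradient (-f) x = -gradient f x := by
  simp [gradient, fderiv_neg]

theorem gradient_comp_linearIsometryEquiv (e : E ≃ₗᵢ[𝕜] F) (f : F → 𝕜) (x : E) :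
    gradient (f ∘ e) x = e.symm (gradient f (e x)) := by
  refine (InnerProductSpace.toDual 𝕜 E).injective (ContinuousLinearMap.ext fun v => ?_)
  rw [InnerProductSpace.toDual_apply_apply, InnerProductSpace.toDual_apply_apply,
    ← e.inner_map_map (e.symm _), e.apply_symm_apply, inner_gradient_left, inner_gradient_left,
    ← e.coe_toContinuousLinearEquiv, e.toContinuousLinearEquiv.comp_right_fderiv]
  rfl

theorem inner_gradient_comp_linearIsometryEquiv (e : E ≃ₗᵢ[𝕜] F) (f g : F → 𝕜) (x : E) :
    inner 𝕜 (gradient (f ∘ e) x) (gradient (g ∘ e) x) =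
      inner 𝕜 (gradient f (e x)) (gradient g (e x)) := by
  rw [gradient_comp_linearIsometryEquiv, gradient_comp_linearIsometryEquiv, e.symm.inner_map_map]

end Gradient

theorem setIntegral_eq_zero_of_comp_eq_neg {X E : Type*} [MeasurableSpace X]
    [NormedAddCommGroup E] [NormedSpace ℝ E] {μ : Measure X} {e : X → X}
    (he : MeasurePreserving e μ μ) (he_emb : MeasurableEmbedding e) {s : Set X}
    (hs : e '' s = s) {f : X → E} (hf : ∀ x, f (e x) = -f x) : ∫ x in s, f x ∂μ = 0 := by
  have hself := he.setIntegral_image_emb he_emb f s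
  simp only [hs, hf, integral_neg] at hself
  have := IsAddTorsionFree.of_isTorsionFree ℝ E
  exact self_eq_neg.mp hself

section PlaneRotation

variable {n : ℕ} {i j : Fin n}

@[simp]
theorem planeRotation_apply_left (x : EuclideanSpace ℝ (Fin n)) :
    planeRotation n i j x i = -x j := by
  simp [planeRotation]

theorem planeRotation_apply_right (hij : i ≠ j) (x : EuclideanSpace ℝ (Fin n)) :
    planeRotation n i j x j = x i := by
  simp [planeRotation, hij.symm]

theorem planeRotation_apply_of_ne {k : Fin n} (hki : k ≠ i) (hkj : k ≠ j)
    (x : EuclideanSpace ℝ (Fin n)) : planeRotation n i j x k = x k := by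
  simp [planeRotation, hki, hkj]

theorem planeRotation_swap_planeRotation (hij : i ≠ j) (x : EuclideanSpace ℝ (Fin n)) :
    planeRotation n j i (planeRotation n i j x) = x := by
  ext k
  rcases eq_or_ne k i with rfl | hki
  · rw [planeRotation_apply_right hij.symm, planeRotation_apply_right hij]
  rcases eq_or_ne k j with rfl | hkj
  · rw [planeRotation_apply_left, planeRotation_apply_left, neg_neg]
  · rw [planeRotation_apply_of_ne hkj hki, planeRotation_apply_of_ne hki hkj]

theorem norm_planeRotation (hij : i ≠ j) (x : EuclideanSpace ℝ (Fin n)) :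
    ‖planeRotation n i j x‖ = ‖x‖ := by
  rw [EuclideanSpace.norm_eq, EuclideanSpace.norm_eq]
  congr 1
  refine Fintype.sum_equiv (Equiv.swap i j) _ _ fun k => ?_
  rcases eq_or_ne k i with rfl | hki
  · simp
  rcases eq_or_ne k j with rfl | hkj
  · simp [planeRotation_apply_right hij]
  · rw [Equiv.swap_apply_of_ne_of_ne hki hkj, planeRotation_apply_of_ne hki hkj]

noncomputable def planeRotationEquiv (hij : i ≠ j) :
    EuclideanSpace ℝ (Fin n) ≃ₗᵢ[ℝ] EuclideanSpace ℝ (Fin n) where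
  toFun := planeRotation n i j
  invFun := planeRotation n j i
  map_add' x y := by
    ext k
    simp only [planeRotation, PiLp.add_apply]
    split_ifs <;> ring
  map_smul' c x := by
    ext k
    simp only [planeRotation, PiLp.smul_apply, smul_eq_mul, RingHom.id_apply]
    split_ifs <;> ring
  left_inv := planeRotation_swap_planeRotation hij
  right_inv := planeRotation_swap_planeRotation hij.symm
  norm_map' := norm_planeRotation hij

@[simp]
theorem coe_planeRotationEquiv (hij : i ≠ j) :
    ⇑(planeRotationEquiv hij) = planeRotation n i j :=
  rfl

end PlaneRotation

theorem integral_inner_gradient_test_functions_eq_zero_general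
    (n : ℕ) (f₁ : ℝ → ℝ)
    (Ω : Set (EuclideanSpace ℝ (Fin n)))
    (hinv : ∀ i j : Fin n, i ≠ j → planeRotation n i j '' Ω = Ω)
    (u : Fin n → EuclideanSpace ℝ (Fin n) → ℝ)
    (hu : ∀ (i : Fin n) (x : EuclideanSpace ℝ (Fin n)), u i x = f₁ ‖x‖ * x i / ‖x‖)
    (i j : Fin n) (hij : i ≠ j) :
    ∫ x in Ω, ⟪gradient (u i) x, gradient (u j) x⟫ = 0 := by
  set e := planeRotationEquiv hij
  have hui : u i ∘ e = -u j := funext fun x => by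
    simp [e, hu, norm_planeRotation hij, neg_div]
  have huj : u j ∘ e = u i := funext fun x => by
    simp [e, hu, norm_planeRotation hij, planeRotation_apply_right hij]
  refine setIntegral_eq_zero_of_comp_eq_neg e.measurePreserving
    e.toHomeomorph.measurableEmbedding (hinv i j hij) fun x => ?_
  rw [← inner_gradient_comp_linearIsometryEquiv, hui, huj, gradient_neg, inner_neg_left,
    real_inner_comm]

/-- For `f₁(r) = r − R₁ⁿ/r^{n−1}`, `uᵢ(x) = f₁(‖x‖) xᵢ/‖x‖`, and a bounded measurable
set `Ω ⊆ ℝⁿ \ {0}` invariant under the rotation by `π/2` in every coordinate plane,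
we have `∫_Ω ⟨∇uᵢ, ∇uⱼ⟩ dV = 0` for all `i ≠ j`. -/
theorem integral_inner_gradient_test_functions_eq_zero
    (n : ℕ) (hn : 2 ≤ n) (R₁ : ℝ) (hR₁ : 0 < R₁)
    (f₁ : ℝ → ℝ) (hf₁ : ∀ r : ℝ, f₁ r = r - R₁ ^ n / r ^ (n - 1))
    (Ω : Set (EuclideanSpace ℝ (Fin n))) (hΩ : MeasurableSet Ω)
    (hΩ0 : (0 : EuclideanSpace ℝ (Fin n)) ∉ Ω) (hΩb : Bornology.IsBounded Ω)
    (hinv : ∀ i j : Fin n, i ≠ j → planeRotation n i j '' Ω = Ω)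
    (u : Fin n → EuclideanSpace ℝ (Fin n) → ℝ)
    (hu : ∀ (i : Fin n) (x : EuclideanSpace ℝ (Fin n)), u i x = f₁ ‖x‖ * x i / ‖x‖)
    (i j : Fin n) (hij : i ≠ j) :
    ∫ x in Ω, ⟪gradient (u i) x, gradient (u j) x⟫ = 0 :=
  integral_inner_gradient_test_functions_eq_zero_general n f₁ Ω hinv u hu i j hij
end

section
/- Fix an integer n ≥ 2 and real numbers 0 < R₁ < R₂. Let f₁(r) = r − R₁ⁿ/r^{n−1} and G(r) = 2·f₁(r)·f₁'(r) + ((n−1)/r)·f₁(r)². Let Ω₀ = B_{R₂} \ closure(B_{R₁}) be the open annulus in ℝⁿ centered at the origin, and let Ω ⊆ ℝⁿ be a bounded measurable set disjoint from the closed ball of radius R₁ centered at the origin, with Lebesgue measure Vol(Ω) = Vol(Ω₀). Then ∫_Ω G(‖x‖) dV ≥ ∫_{Ω₀} G(‖x‖) dV. -/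
open MeasureTheory Set

/-!
In closed form `G` is increasing on `(0, ∞)`. Every point of `Ω \ Ω₀` has norm at least `R₂` and
every point of `Ω₀ \ Ω` norm less than `R₂`, while the two differences have the same volume;
hence the integral of `G ‖x‖` over `Ω \ Ω₀` is at least `G R₂ · vol(Ω \ Ω₀)`, which is at least
the integral over `Ω₀ \ Ω`.
-/

theorem setIntegral_le_setIntegral_of_measure_eq {X : Type*} [MeasurableSpace X]
    {μ : Measure X} {g : X → ℝ} {A B : Set X} (hA : MeasurableSet A) (hB : MeasurableSet B)
    (hAB : μ A = μ B) (hμA : μ A ≠ ⊤) (hgA : IntegrableOn g A μ) (hgB : IntegrableOn g B μ)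
    (t : ℝ) (hle : ∀ x ∈ A \ B, g x ≤ t) (hge : ∀ x ∈ B \ A, t ≤ g x) :
    ∫ x in A, g x ∂μ ≤ ∫ x in B, g x ∂μ := by
  have hfin : μ (A \ B) ≠ ⊤ := measure_ne_top_of_subset sdiff_subset hμA
  have hdiff : μ (A \ B) = μ (B \ A) :=
    measure_sdiff_symm hA.nullMeasurableSet hB.nullMeasurableSet hAB
      (measure_ne_top_of_subset inter_subset_left hμA)
  have hupper : ∫ x in A \ B, g x ∂μ ≤ μ.real (B \ A) • t := by
    rw [measureReal_def, ← hdiff, ← measureReal_def, ← setIntegral_const]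
    exact setIntegral_mono_on (hgA.mono_set sdiff_subset) (integrableOn_const hfin)
      (hA.diff hB) hle
  have hlower : μ.real (B \ A) • t ≤ ∫ x in B \ A, g x ∂μ :=
    setIntegral_ge_of_const_le (hB.diff hA) (hdiff ▸ hfin) hge (hgB.mono_set sdiff_subset)
  rw [← integral_inter_add_sdiff hB hgA, ← integral_inter_add_sdiff hA hgB, inter_comm B A]
  linarith

theorem integrableOn_comp_norm_of_continuousOn {E : Type*} [NormedAddCommGroup E]
    [MeasurableSpace E] [OpensMeasurableSpace E] [ProperSpace E] {μ : Measure E}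
    [IsFiniteMeasureOnCompacts μ] {g : ℝ → ℝ} {a : ℝ} (hg : ContinuousOn g (Ici a))
    {S : Set E} (hS : Bornology.IsBounded S) (hSa : ∀ x ∈ S, a ≤ ‖x‖) :
    IntegrableOn (fun x => g ‖x‖) S μ := by
  obtain ⟨M, hM⟩ := hS.subset_closedBall 0
  have hK : IsCompact (Metric.closedBall (0 : E) M ∩ {x | a ≤ ‖x‖}) :=
    (isCompact_closedBall 0 M).inter_right (isClosed_le continuous_const continuous_norm)
  refine (ContinuousOn.integrableOn_compact hK ?_).mono_set fun x hx => ⟨hM hx, hSa x hx⟩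
  exact hg.comp continuous_norm.continuousOn fun x hx => hx.2

theorem hasDerivAt_sub_div_pow (c : ℝ) (k : ℕ) {r : ℝ} (hr : r ≠ 0) :
    HasDerivAt (fun r => r - c / r ^ k) (1 + k * c / r ^ (k + 1)) r := by
  refine ((hasDerivAt_id' r).sub ((hasDerivAt_const r c).div (hasDerivAt_pow k r)
    (pow_ne_zero k hr))).congr_deriv ?_
  rcases k with _ | k
  · simp
  · simp only [Nat.add_sub_cancel]
    field_simp
    ring

/-- `G` in closed form, for `n = k + 1` and `c = R₁ⁿ`. -/
noncomputable def explicitG (c : ℝ) (k : ℕ) (r : ℝ) : ℝ :=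
  (k + 2) * r - 2 * c / r ^ k - k * c ^ 2 / r ^ (2 * k + 1)

theorem eqOn_explicitG {c : ℝ} {k : ℕ} {f G : ℝ → ℝ} (hf : ∀ r, f r = r - c / r ^ k)
    (hG : ∀ r, G r = 2 * f r * deriv f r + k / r * f r ^ 2) : EqOn G (explicitG c k) {0}ᶜ := by
  intro r (hr : r ≠ 0)
  rw [hG, (funext hf : f = _), (hasDerivAt_sub_div_pow c k hr).deriv, explicitG]
  field_simp
  ring

theorem monotoneOn_explicitG {c : ℝ} (hc : 0 ≤ c) (k : ℕ) :
    MonotoneOn (explicitG c k) (Ioi 0) := by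
  intro r (hr : 0 < r) s _ hrs
  unfold explicitG
  gcongr

theorem continuousOn_explicitG (c : ℝ) (k : ℕ) : ContinuousOn (explicitG c k) (Ioi 0) := by
  unfold explicitG
  fun_prop (disch := intro x hx; exact pow_ne_zero _ (ne_of_gt hx))

/-- For `f₁(r) = r − R₁ⁿ/r^{n−1}` and `G(r) = 2 f₁(r) f₁'(r) + ((n−1)/r) f₁(r)²`, if
`Ω₀ = B_{R₂} \ closure(B_{R₁})` is the concentric annulus and `Ω` is a bounded
measurable set disjoint from `closedBall 0 R₁` with the same volume as `Ω₀`, then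
`∫_Ω G(‖x‖) dV ≥ ∫_{Ω₀} G(‖x‖) dV`. -/
theorem integral_G_ge_integral_G_annulus
    (n : ℕ) (hn : 2 ≤ n) (R₁ R₂ : ℝ) (hR₁ : 0 < R₁) (hR₁R₂ : R₁ < R₂)
    (f₁ G : ℝ → ℝ)
    (hf₁ : ∀ r : ℝ, f₁ r = r - R₁ ^ n / r ^ (n - 1))
    (hG : ∀ r : ℝ, G r = 2 * f₁ r * deriv f₁ r + ((n : ℝ) - 1) / r * (f₁ r) ^ 2)
    (Ω : Set (EuclideanSpace ℝ (Fin n))) (hΩ : MeasurableSet Ω)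
    (hbd : Bornology.IsBounded Ω)
    (hdisj : Disjoint Ω (Metric.closedBall (0 : EuclideanSpace ℝ (Fin n)) R₁))
    (hvol : volume Ω =
      volume (Metric.ball (0 : EuclideanSpace ℝ (Fin n)) R₂ \
        Metric.closedBall (0 : EuclideanSpace ℝ (Fin n)) R₁)) :
    ∫ x in Metric.ball (0 : EuclideanSpace ℝ (Fin n)) R₂ \
        Metric.closedBall (0 : EuclideanSpace ℝ (Fin n)) R₁, G ‖x‖ ≤
      ∫ x in Ω, G ‖x‖ := by
  obtain ⟨k, rfl⟩ : ∃ k, n = k + 1 := ⟨n - 1, by omega⟩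
  have hGeq : EqOn G (explicitG (R₁ ^ (k + 1)) k) (Ioi 0) :=
    (eqOn_explicitG hf₁ fun r => by rw [hG]; push_cast; ring).mono fun r hr => ne_of_gt hr
  have hmono : MonotoneOn G (Ioi 0) := (monotoneOn_explicitG (by positivity) k).congr hGeq.symm
  have hcont : ContinuousOn G (Ici R₁) :=
    ((continuousOn_explicitG _ k).congr hGeq).mono (Ici_subset_Ioi.mpr hR₁)
  set Ω₀ := Metric.ball (0 : EuclideanSpace ℝ (Fin (k + 1))) R₂ \ Metric.closedBall 0 R₁
  have hΩ₀ : ∀ x, x ∈ Ω₀ ↔ ‖x‖ < R₂ ∧ R₁ < ‖x‖ := by simp [Ω₀]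
  have hΩnorm : ∀ x ∈ Ω, R₁ < ‖x‖ := fun x hx => by
    simpa using hdisj.notMem_of_mem_left hx
  have hΩ₀bd : Bornology.IsBounded Ω₀ := Metric.isBounded_ball.subset sdiff_subset
  refine setIntegral_le_setIntegral_of_measure_eq
    (measurableSet_ball.diff measurableSet_closedBall) hΩ hvol.symm hΩ₀bd.measure_lt_top.ne
    (integrableOn_comp_norm_of_continuousOn hcont hΩ₀bd fun x hx => ((hΩ₀ x).1 hx).2.le)
    (integrableOn_comp_norm_of_continuousOn hcont hbd fun x hx => (hΩnorm x hx).le)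
    (G R₂) (fun x hx => ?_) (fun x hx => ?_)
  · obtain ⟨hxR₂, hR₁x⟩ := (hΩ₀ x).1 hx.1
    exact hmono (hR₁.trans hR₁x) (hR₁.trans hR₁R₂) hxR₂.le
  · have hR₁x := hΩnorm x hx.1
    have hR₂x : R₂ ≤ ‖x‖ := not_lt.1 fun h => hx.2 ((hΩ₀ x).2 ⟨h, hR₁x⟩)
    exact hmono (hR₁.trans hR₁R₂) (hR₁.trans hR₁x) hR₂x
end
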